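/- arXiv:1408.2935 — 5 statements merged into one kernel-verified Lean document; each statement's English description precedes it below -/
import Mathlib

section
/- Let X be a connected simple graph on n > 2 vertices with Laplacian L having spectral decomposition L = Σ_r λ_r F_r (F_r orthogonal projections onto distinct eigenspaces, λ_0 = 0 < λ_1 < ... < λ_d). Suppose for distinct vertices u, v and every r, F_r e_u = ± F_r e_v. If F_r e_u = F_r e_v holds for exactly one index r, then this index is r = 0 and e_u = e_v, a contradiction; hence at least two distinct eigenvalues λ_r satisfy F_r e_u = F_r e_v. -/
/-!
Since `∑ F_r = 1`, `e_u + e_v = ∑ F_r (e_u + e_v)`, and by strong cospectrality the `r`-th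
term vanishes unless `λ_r ∈ Λ⁺`. If `Λ⁺ ⊆ {λ_r}`, then `e_u + e_v = F_r (e_u + e_v)` is a
`λ_r`-eigenvector of `L`. The entries of `L x` always sum to `0` while those of `e_u + e_v` sum
to `2`, so `λ_r = 0`; then `e_u + e_v` is constant on the connected graph, which is absurd
since it vanishes at a third vertex.
-/

open Finset Matrix

namespace Matrix

variable {ι V R : Type*} [Fintype ι] [Fintype V] [DecidableEq V] [CommRing R]
  {F : ι → Matrix V V R}

theorem mulVec_eq_self_of_forall_ne_mulVec_eq_zero (hsum : ∑ s, F s = 1)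
    {z : V → R} {r : ι} (hz : ∀ s ≠ r, F s *ᵥ z = 0) : F r *ᵥ z = z :=
  calc F r *ᵥ z = ∑ s, F s *ᵥ z := (sum_eq_single r (fun s _ hs => hz s hs) (by simp)).symm
    _ = z := by rw [← sum_mulVec, hsum, one_mulVec]

theorem sum_smul_mulVec_mulVec (hproj : ∀ r, F r * F r = F r)
    (horth : ∀ r s, r ≠ s → F r * F s = 0) (c : ι → R) (r : ι) (z : V → R) :
    (∑ s, c s • F s) *ᵥ (F r *ᵥ z) = c r • (F r *ᵥ z) := by
  have hvanish : ∀ s ≠ r, (c s • F s) *ᵥ (F r *ᵥ z) = 0 := fun s hs => by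
    rw [smul_mulVec, mulVec_mulVec, horth s r hs, zero_mulVec, smul_zero]
  rw [sum_mulVec, sum_eq_single r (fun s _ hs => hvanish s hs) (by simp), smul_mulVec,
    mulVec_mulVec, hproj]

end Matrix

namespace SimpleGraph

variable {V : Type*} [Fintype V] [DecidableEq V] (G : SimpleGraph V) [DecidableRel G.Adj]

theorem sum_lapMatrix_mulVec {R : Type*} [CommRing R] (x : V → R) :
    ∑ i, (G.lapMatrix R *ᵥ x) i = 0 := by
  rw [← one_dotProduct, dotProduct_mulVec, ← mulVec_transpose, (G.isSymm_lapMatrix (R := R)).eq,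
    show (1 : V → R) = fun _ ↦ 1 from rfl, lapMatrix_mulVec_const_eq_zero, zero_dotProduct]

variable {G} in
theorem Connected.sum_eq_zero_of_lapMatrix_mulVec_eq_smul (hconn : G.Connected) {x : V → ℝ}
    {μ : ℝ} (hx : G.lapMatrix ℝ *ᵥ x = μ • x) {w : V} (hw : x w = 0) : ∑ i, x i = 0 := by
  by_contra hsum
  have hμ : μ = 0 := by
    have h := G.sum_lapMatrix_mulVec x
    simp only [hx, Pi.smul_apply, smul_eq_mul, ← mul_sum] at h
    exact (mul_eq_zero.1 h).resolve_right hsum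
  have hconst := G.lapMatrix_mulVec_eq_zero_iff_forall_reachable.1 (by rw [hx, hμ, zero_smul])
  exact hsum (sum_eq_zero fun i _ => (hconst i w (hconn i w)).trans hw)

end SimpleGraph

theorem two_plus_eigenvalues_of_strong_cospectrality_general
    {V : Type*} [Fintype V] [DecidableEq V]
    (G : SimpleGraph V) [DecidableRel G.Adj] (hconn : G.Connected)
    (hn : 2 < Fintype.card V)
    (d : ℕ) (lam : Fin (d + 1) → ℝ)
    (F : Fin (d + 1) → Matrix V V ℝ)
    (hproj : ∀ r, F r * F r = F r)
    (horth : ∀ r s, r ≠ s → F r * F s = 0)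
    (hsum : ∑ r, F r = 1)
    (hdecomp : G.lapMatrix ℝ = ∑ r, lam r • F r)
    (u v : V)
    (hcospec : ∀ r, F r *ᵥ Pi.single u 1 = F r *ᵥ Pi.single v 1 ∨
                    F r *ᵥ Pi.single u 1 = -(F r *ᵥ Pi.single v 1)) :
    2 ≤ {r : Fin (d + 1) |
          F r *ᵥ Pi.single u 1 = F r *ᵥ Pi.single v 1 ∧
          F r *ᵥ Pi.single u (1 : ℝ) ≠ 0}.ncard := by
  set x : V → ℝ := Pi.single u 1 + Pi.single v 1 with hx
  obtain ⟨w, -, hw⟩ := exists_mem_notMem_of_card_lt_card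
    ((card_le_two (a := u) (b := v)).trans_lt hn)
  by_contra! hcard
  obtain ⟨r, hr⟩ := (Set.ncard_le_one_iff_subset_singleton).1 (Nat.le_of_lt_succ hcard)
  have hvanish : ∀ s ≠ r, F s *ᵥ x = 0 := by
    intro s hs
    rw [mulVec_add]
    rcases hcospec s with h | h
    · have hu : F s *ᵥ Pi.single u 1 = 0 := not_not.1 fun hne => hs (hr ⟨h, hne⟩)
      rw [← h, hu, add_zero]
    · rw [h, neg_add_cancel]
  have heig : G.lapMatrix ℝ *ᵥ x = lam r • x := by
    rw [← mulVec_eq_self_of_forall_ne_mulVec_eq_zero hsum hvanish, hdecomp,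
      sum_smul_mulVec_mulVec hproj horth]
  have hxw : x w = 0 := by
    simp only [mem_insert, mem_singleton, not_or] at hw
    simp [hx, hw.1, hw.2]
  have hx_sum := hconn.sum_eq_zero_of_lapMatrix_mulVec_eq_smul heig hxw
  simp [hx, sum_add_distrib] at hx_sum

/-- Let `X` be a connected graph on `n > 2` vertices with Laplacian
spectral decomposition `L = Σ_r λ_r F_r` (orthogonal projections onto eigenspaces for
distinct eigenvalues `0 = λ₀ < λ₁ < ... < λ_d`). If for distinct vertices `u, v` every
projection satisfies `F_r e_u = ± F_r e_v`, then at least two distinct eigenvalues `λ_r`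
satisfy `F_r e_u = F_r e_v ≠ 0`. -/
theorem two_plus_eigenvalues_of_strong_cospectrality
    {V : Type*} [Fintype V] [DecidableEq V]
    (G : SimpleGraph V) [DecidableRel G.Adj] (hconn : G.Connected)
    (hn : 2 < Fintype.card V)
    (d : ℕ) (lam : Fin (d + 1) → ℝ) (hmono : StrictMono lam) (h0 : lam 0 = 0)
    (F : Fin (d + 1) → Matrix V V ℝ)
    (hsymm : ∀ r, (F r).IsSymm)
    (hproj : ∀ r, F r * F r = F r)
    (horth : ∀ r s, r ≠ s → F r * F s = 0)
    (hsum : ∑ r, F r = 1)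
    (hdecomp : G.lapMatrix ℝ = ∑ r, lam r • F r)
    (u v : V) (huv : u ≠ v)
    (hcospec : ∀ r, F r *ᵥ Pi.single u 1 = F r *ᵥ Pi.single v 1 ∨
                    F r *ᵥ Pi.single u 1 = -(F r *ᵥ Pi.single v 1)) :
    2 ≤ {r : Fin (d + 1) |
          F r *ᵥ Pi.single u 1 = F r *ᵥ Pi.single v 1 ∧
          F r *ᵥ Pi.single u (1 : ℝ) ≠ 0}.ncard :=
  two_plus_eigenvalues_of_strong_cospectrality_general G hconn hn d lam F hproj horth hsum hdecomp u
    v hcospec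
end

section
/- Let X be a graph with Laplacian L = Σ_r λ_r F_r (spectral decomposition into projections onto distinct eigenspaces). Let u, v be distinct vertices with F_r e_u = ± F_r e_v for all r. If there is exactly one eigenvalue λ such that F e_u = −F e_v ≠ 0 for the corresponding projection F, then e_u − e_v is an eigenvector of L for λ, and consequently u and v are twin vertices (N(u)\{v} = N(v)\{u}). -/
/-!
For `r ≠ r₀` the hypotheses leave only `F_r e_u = F_r e_v` or `F_r e_u = -F_r e_v = 0`, so
`F_r (e_u - e_v) = 0`. Since the `F_r` sum to the identity, `e_u - e_v = F_{r₀} (e_u - e_v)`,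
hence `L (e_u - e_v) = λ_{r₀} (e_u - e_v)`. At a vertex `w ∉ {u, v}` the right-hand side
vanishes while the left-hand side is `[w ~ v] - [w ~ u]`, so `u` and `v` are twins.
-/

open Finset Matrix

lemma sub_eq_zero_of_eq_or_eq_neg {A : Type*} [AddGroup A] {a b : A} (h : a = b ∨ a = -b)
    (hneg : ¬(a = -b ∧ a ≠ 0)) : a - b = 0 := by
  rcases h with rfl | h
  · exact sub_self a
  · have ha : a = 0 := not_not.mp fun ha => hneg ⟨h, ha⟩
    have hb : b = 0 := neg_eq_zero.mp (h ▸ ha)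
    rw [ha, hb, sub_zero]

section SpectralDecomposition

variable {ι n R : Type*} [Fintype ι] [Fintype n] [DecidableEq n] [CommRing R]
  {F : ι → Matrix n n R} {x : n → R} {r₀ : ι}

theorem mulVec_eq_self_of_sum_eq_one (hsum : ∑ r, F r = 1)
    (hzero : ∀ r, r ≠ r₀ → F r *ᵥ x = 0) : F r₀ *ᵥ x = x := by
  calc F r₀ *ᵥ x = ∑ r, F r *ᵥ x := (sum_eq_single r₀ (fun r _ hr => hzero r hr) (by simp)).symm
    _ = x := by rw [← sum_mulVec, hsum, one_mulVec]

theorem sum_smul_mulVec_eq_smul (lam : ι → R) (hsum : ∑ r, F r = 1)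
    (hzero : ∀ r, r ≠ r₀ → F r *ᵥ x = 0) : (∑ r, lam r • F r) *ᵥ x = lam r₀ • x := by
  calc (∑ r, lam r • F r) *ᵥ x = ∑ r, lam r • (F r *ᵥ x) := by simp only [sum_mulVec, smul_mulVec]
    _ = lam r₀ • (F r₀ *ᵥ x) := sum_eq_single r₀ (fun r _ hr => by rw [hzero r hr, smul_zero])
        (by simp)
    _ = lam r₀ • x := by rw [mulVec_eq_self_of_sum_eq_one hsum hzero]

end SpectralDecomposition

namespace SimpleGraph

variable {V R : Type*} [Fintype V] [DecidableEq V] (G : SimpleGraph V) [DecidableRel G.Adj]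
  {u v w : V}

theorem lapMatrix_mulVec_single_sub_single_apply [Ring R] (hwu : w ≠ u) (hwv : w ≠ v) :
    (G.lapMatrix R *ᵥ (Pi.single u 1 - Pi.single v 1)) w =
      (if G.Adj w v then 1 else 0) - (if G.Adj w u then 1 else 0) := by
  simp [lapMatrix_mulVec_apply, Pi.single_eq_of_ne hwu, Pi.single_eq_of_ne hwv,
    sum_pi_single', mem_neighborFinset]

theorem adj_iff_adj_of_lapMatrix_mulVec_eq_smul [Ring R] [Nontrivial R] {c : R}
    (h : G.lapMatrix R *ᵥ (Pi.single u 1 - Pi.single v 1) = c • (Pi.single u 1 - Pi.single v 1))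
    (hwu : w ≠ u) (hwv : w ≠ v) : G.Adj u w ↔ G.Adj v w := by
  have hw := congrFun h w
  rw [G.lapMatrix_mulVec_single_sub_single_apply hwu hwv] at hw
  simp only [Pi.smul_apply, Pi.sub_apply, Pi.single_eq_of_ne hwu, Pi.single_eq_of_ne hwv,
    sub_self, smul_zero] at hw
  rw [G.adj_comm u w, G.adj_comm v w]
  by_cases hu : G.Adj w u <;> by_cases hv : G.Adj w v <;> simp_all

end SimpleGraph

theorem twins_of_unique_minus_eigenvalue_general
    {V : Type*} [Fintype V] [DecidableEq V]
    (G : SimpleGraph V) [DecidableRel G.Adj]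
    (d : ℕ) (lam : Fin (d + 1) → ℝ)
    (F : Fin (d + 1) → Matrix V V ℝ)
    (hsum : ∑ r, F r = 1)
    (hdecomp : G.lapMatrix ℝ = ∑ r, lam r • F r)
    (u v : V)
    (hcospec : ∀ r, F r *ᵥ Pi.single u 1 = F r *ᵥ Pi.single v 1 ∨
                    F r *ᵥ Pi.single u 1 = -(F r *ᵥ Pi.single v 1))
    (r₀ : Fin (d + 1))
    (huniq : ∀ r, r ≠ r₀ →
        ¬(F r *ᵥ Pi.single u 1 = -(F r *ᵥ Pi.single v 1) ∧
          F r *ᵥ Pi.single u (1 : ℝ) ≠ 0)) :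
    G.lapMatrix ℝ *ᵥ ((Pi.single u 1 - Pi.single v 1 : V → ℝ))
      = lam r₀ • ((Pi.single u 1 - Pi.single v 1 : V → ℝ)) ∧
    ∀ w : V, w ≠ u → w ≠ v → (G.Adj u w ↔ G.Adj v w) := by
  have hzero : ∀ r, r ≠ r₀ → F r *ᵥ (Pi.single u 1 - Pi.single v 1) = 0 := fun r hr => by
    rw [mulVec_sub]
    exact sub_eq_zero_of_eq_or_eq_neg (hcospec r) (huniq r hr)
  have heig : G.lapMatrix ℝ *ᵥ (Pi.single u 1 - Pi.single v 1) =
      lam r₀ • (Pi.single u 1 - Pi.single v 1) := by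
    rw [hdecomp]
    exact sum_smul_mulVec_eq_smul lam hsum hzero
  exact ⟨heig, fun w => G.adj_iff_adj_of_lapMatrix_mulVec_eq_smul heig⟩

/-- Let `L = Σ_r λ_r F_r` be the spectral decomposition of the
Laplacian of a graph `X`, and let `u ≠ v` be vertices with `F_r e_u = ± F_r e_v` for
all `r`. If exactly one index `r₀` satisfies `F_{r₀} e_u = -F_{r₀} e_v ≠ 0`, then
`e_u - e_v` is an eigenvector of `L` for `λ_{r₀}`, and `u` and `v` are twins. -/
theorem twins_of_unique_minus_eigenvalue
    {V : Type*} [Fintype V] [DecidableEq V]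
    (G : SimpleGraph V) [DecidableRel G.Adj]
    (d : ℕ) (lam : Fin (d + 1) → ℝ) (hinj : Function.Injective lam)
    (F : Fin (d + 1) → Matrix V V ℝ)
    (hsymm : ∀ r, (F r).IsSymm)
    (hproj : ∀ r, F r * F r = F r)
    (horth : ∀ r s, r ≠ s → F r * F s = 0)
    (hsum : ∑ r, F r = 1)
    (hdecomp : G.lapMatrix ℝ = ∑ r, lam r • F r)
    (u v : V) (huv : u ≠ v)
    (hcospec : ∀ r, F r *ᵥ Pi.single u 1 = F r *ᵥ Pi.single v 1 ∨
                    F r *ᵥ Pi.single u 1 = -(F r *ᵥ Pi.single v 1))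
    (r₀ : Fin (d + 1))
    (hr₀ : F r₀ *ᵥ Pi.single u 1 = -(F r₀ *ᵥ Pi.single v 1))
    (hr₀ne : F r₀ *ᵥ Pi.single u (1 : ℝ) ≠ 0)
    (huniq : ∀ r, r ≠ r₀ →
        ¬(F r *ᵥ Pi.single u 1 = -(F r *ᵥ Pi.single v 1) ∧
          F r *ᵥ Pi.single u (1 : ℝ) ≠ 0)) :
    G.lapMatrix ℝ *ᵥ ((Pi.single u 1 - Pi.single v 1 : V → ℝ))
      = lam r₀ • ((Pi.single u 1 - Pi.single v 1 : V → ℝ)) ∧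
    ∀ w : V, w ≠ u → w ≠ v → (G.Adj u w ↔ G.Adj v w) :=
  twins_of_unique_minus_eigenvalue_general G d lam F hsum hdecomp u v hcospec r₀ huniq
end

section
/- Let X be a bipartite simple graph with a unique perfect matching. Then the adjacency matrix A of X is invertible and A⁻¹ has integer entries. -/
/-!
A permutation `σ` contributes to `det A = ∑ σ, sign σ * ∏ i, A (σ i) i` only if every `i` is
adjacent to `σ i`. In a bipartite graph `σ` then swaps the two sides, and sending each vertex `v`
to `σ v` on one side and to `σ⁻¹ v` on the other is a perfect matching, as is the rule with the
sides exchanged. If the perfect matching is unique, these two matchings determine `σ`, so exactly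
one term of the expansion survives and `det A = ± 1`.
-/

open Matrix Equiv

namespace Equiv.Perm

variable {V : Type*}

def alternate (σ : Perm V) (part : V → Bool) (v : V) : V :=
  if part v then σ v else σ.symm v

theorem involutive_alternate {σ : Perm V} {part : V → Bool}
    (hσ : ∀ v, part (σ v) ≠ part v) :
    Function.Involutive (alternate σ part) := by
  intro v
  have hσ_symm : part (σ.symm v) ≠ part v := by
    simpa using (hσ (σ.symm v)).symm
  cases hv : part v
  · have hσv : part (σ.symm v) = true := by simpa [hv] using hσ_symm
    simp [alternate, hv, hσv]
  · have hσv : part (σ v) = false := by simpa [hv] using hσ v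
    simp [alternate, hv, hσv]

end Equiv.Perm

namespace SimpleGraph

variable {V : Type*} {G : SimpleGraph V}

def Subgraph.ofInvolutive (f : V → V) (hf : Function.Involutive f) (hadj : ∀ v, G.Adj v (f v)) :
    G.Subgraph where
  verts := Set.univ
  Adj v w := w = f v
  adj_sub := by rintro v w rfl; exact hadj v
  edge_vert _ := trivial
  symm := ⟨by rintro v w rfl; exact (hf v).symm⟩

theorem Subgraph.isPerfectMatching_ofInvolutive (f : V → V) (hf : Function.Involutive f)
    (hadj : ∀ v, G.Adj v (f v)) : (Subgraph.ofInvolutive f hf hadj).IsPerfectMatching :=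
  Subgraph.isPerfectMatching_iff.mpr fun v => ⟨f v, rfl, fun _ hw => hw⟩

theorem Subgraph.IsPerfectMatching.exists_involutive {M : G.Subgraph} (hM : M.IsPerfectMatching) :
    ∃ f : V → V, Function.Involutive f ∧ ∀ v, G.Adj v (f v) := by
  choose f hf hf_unique using Subgraph.isPerfectMatching_iff.mp hM
  exact ⟨f, fun v => (hf_unique (f v) v (hf v).symm).symm, fun v => M.adj_sub (hf v)⟩

theorem eq_of_existsUnique_isPerfectMatching (hpm : ∃! M : G.Subgraph, M.IsPerfectMatching)
    {f g : V → V} (hf : Function.Involutive f) (hg : Function.Involutive g)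
    (hf_adj : ∀ v, G.Adj v (f v)) (hg_adj : ∀ v, G.Adj v (g v)) : f = g := by
  have hfg : Subgraph.ofInvolutive f hf hf_adj = Subgraph.ofInvolutive g hg hg_adj :=
    hpm.unique (Subgraph.isPerfectMatching_ofInvolutive f hf hf_adj)
      (Subgraph.isPerfectMatching_ofInvolutive g hg hg_adj)
  funext v
  have hv : (Subgraph.ofInvolutive f hf hf_adj).Adj v (f v) := rfl
  rwa [hfg] at hv

theorem adj_symm_apply {σ : Perm V} (hσ : ∀ v, G.Adj v (σ v)) (v : V) :
    G.Adj v (σ.symm v) := by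
  simpa using (hσ (σ.symm v)).symm

theorem adj_alternate {σ : Perm V} (hσ : ∀ v, G.Adj v (σ v)) (part : V → Bool) (v : V) :
    G.Adj v (σ.alternate part v) := by
  unfold Perm.alternate
  split
  · exact hσ v
  · exact adj_symm_apply hσ v

theorem perm_eq_of_existsUnique_isPerfectMatching {part : V → Bool}
    (hbip : ∀ ⦃x y : V⦄, G.Adj x y → part x ≠ part y)
    (hpm : ∃! M : G.Subgraph, M.IsPerfectMatching) {σ τ : Perm V}
    (hσ : ∀ v, G.Adj v (σ v)) (hτ : ∀ v, G.Adj v (τ v)) : σ = τ := by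
  have alternate_eq : ∀ ρ ρ' : Perm V, (∀ v, G.Adj v (ρ v)) → (∀ v, G.Adj v (ρ' v)) →
      ρ.alternate part = ρ'.alternate part := fun ρ ρ' hρ hρ' =>
    eq_of_existsUnique_isPerfectMatching hpm
      (Perm.involutive_alternate fun v => (hbip (hρ v)).symm)
      (Perm.involutive_alternate fun v => (hbip (hρ' v)).symm)
      (adj_alternate hρ part) (adj_alternate hρ' part)
  ext v
  cases hv : part v
  · have := alternate_eq σ.symm τ.symm (adj_symm_apply hσ) (adj_symm_apply hτ)
    simpa [Perm.alternate, hv] using congrFun this v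
  · simpa [Perm.alternate, hv] using congrFun (alternate_eq σ τ hσ hτ) v

theorem det_adjMatrix_eq_sign [Fintype V] [DecidableEq V] [DecidableRel G.Adj]
    {R : Type*} [CommRing R] {σ₀ : Perm V} (hσ₀ : ∀ v, G.Adj v (σ₀ v))
    (hunique : ∀ σ : Perm V, (∀ v, G.Adj v (σ v)) → σ = σ₀) :
    (G.adjMatrix R).det = Perm.sign σ₀ := by
  rw [det_apply, Finset.sum_eq_single σ₀]
  · have hprod : ∏ i, G.adjMatrix R (σ₀ i) i = 1 :=
      Finset.prod_eq_one fun i _ => by simp [adjMatrix_apply, (hσ₀ i).symm]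
    rw [hprod, Units.smul_def, zsmul_one]
  · intro σ _ hne
    obtain ⟨i, hi⟩ : ∃ i, ¬G.Adj i (σ i) := by
      by_contra! h
      exact hne (hunique σ h)
    have hσi : G.adjMatrix R (σ i) i = 0 := by rw [adjMatrix_apply, if_neg fun h => hi h.symm]
    rw [Finset.prod_eq_zero (f := fun j => G.adjMatrix R (σ j) j) (Finset.mem_univ i) hσi,
      smul_zero]
  · simp

end SimpleGraph

/-- If a bipartite graph has a unique perfect matching, then its
adjacency matrix is invertible with an integer inverse, i.e. it is a unit of the
ring of integer matrices. -/
theorem adjMatrix_isUnit_of_unique_perfect_matching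
    {V : Type*} [Fintype V] [DecidableEq V]
    (G : SimpleGraph V) [DecidableRel G.Adj]
    (part : V → Bool) (hbip : ∀ ⦃x y : V⦄, G.Adj x y → part x ≠ part y)
    (hpm : ∃! M : G.Subgraph, M.IsPerfectMatching) :
    IsUnit (G.adjMatrix ℤ) := by
  obtain ⟨f, hf, hf_adj⟩ := hpm.exists.choose_spec.exists_involutive
  have hdet : (G.adjMatrix ℤ).det = Perm.sign hf.toPerm :=
    SimpleGraph.det_adjMatrix_eq_sign (σ₀ := hf.toPerm) hf_adj fun _ hσ =>
      SimpleGraph.perm_eq_of_existsUnique_isPerfectMatching hbip hpm hσ hf_adj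
  rw [isUnit_iff_isUnit_det, hdet]
  exact Units.isUnit _
end

section
/- Let X be a bipartite simple graph with adjacency matrix A, and suppose exp(itA) e_u = γ e_v for some t > 0, γ ∈ ℂ, where u and v lie in different bipartition classes. Then γ is purely imaginary with |γ| = 1, so γ = ±i. -/
open Finset Matrix

/-- If a bipartite graph admits adjacency perfect state transfer
`exp(itA) e_u = γ e_v` between vertices `u, v` in different bipartition classes,
then `γ = i` or `γ = -i`. -/
theorem pst_phase_pm_i_of_bipartite
    {V : Type*} [Fintype V] [DecidableEq V]
    (G : SimpleGraph V) [DecidableRel G.Adj]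
    (part : V → Bool) (hbip : ∀ ⦃x y : V⦄, G.Adj x y → part x ≠ part y)
    (u v : V) (huv : u ≠ v) (hclass : part u ≠ part v)
    (t : ℝ) (ht : 0 < t) (γ : ℂ)
    (hpst : NormedSpace.exp ((t * Complex.I) • G.adjMatrix ℂ) *ᵥ Pi.single u 1
        = γ • (Pi.single v 1 : V → ℂ)) :
    γ = Complex.I ∨ γ = - Complex.I := by
  classical
  set N : Matrix V V ℂ := ((t : ℂ) * Complex.I) • G.adjMatrix ℂ with hN
  set M : Matrix V V ℂ := NormedSpace.exp N with hM
  -- sign function and diagonal matrix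
  set d : V → ℂ := fun x => if part x then 1 else -1 with hd
  have hd_sq : ∀ x, d x * d x = 1 := by
    intro x; by_cases h : part x <;> simp [hd, h]
  have hd_ne : ∀ x y, part x ≠ part y → d x * d y = -1 := by
    intro x y h
    rcases Bool.eq_false_or_eq_true (part x) with hx | hx <;>
      rcases Bool.eq_false_or_eq_true (part y) with hy | hy <;>
        simp [hd, hx, hy] at h ⊢
  set D : Matrix V V ℂ := Matrix.diagonal d with hD
  have hDD : D * D = 1 := by
    rw [hD, Matrix.diagonal_mul_diagonal]
    have h1 : (fun i => d i * d i) = fun _ => (1 : ℂ) := funext hd_sq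
    rw [h1, Matrix.diagonal_one]
  have hDunit : IsUnit D := ⟨⟨D, D, hDD, hDD⟩, rfl⟩
  have hDinv : D⁻¹ = D := Matrix.inv_eq_left_inv hDD
  -- D * A * D = -A
  have hDAD : D * G.adjMatrix ℂ * D = -(G.adjMatrix ℂ) := by
    ext x y
    simp only [hD, Matrix.diagonal_mul, Matrix.mul_diagonal, Matrix.neg_apply]
    by_cases h : G.Adj x y
    · have := hd_ne x y (hbip h)
      simp [SimpleGraph.adjMatrix_apply, h]
      rw [mul_comm (d x) (d y)] at this ⊢
      linear_combination this
    · simp [SimpleGraph.adjMatrix_apply, h]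
  have hDND : D * N * D = -N := by
    rw [hN, Matrix.mul_smul, Matrix.smul_mul, hDAD, smul_neg]
  -- exp of -N equals D M D
  have hexp_neg : NormedSpace.exp (-N) = D * M * D := by
    rw [← hDND]
    have := Matrix.exp_conj D N hDunit
    rw [hDinv] at this
    exact this
  -- conj transpose of N is -N
  have hNH : Nᴴ = -N := by
    rw [hN]
    ext x y
    simp [Matrix.conjTranspose_apply, SimpleGraph.adjMatrix_apply, G.adj_comm x y,
      apply_ite (starRingEnd ℂ), Complex.ext_iff]
    by_cases h : G.Adj y x <;> simp [h, G.adj_comm x y]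
  have hMH : Mᴴ = D * M * D := by
    rw [hM, ← Matrix.exp_conjTranspose, hNH, hexp_neg]
  -- M is symmetric
  have hNT : Nᵀ = N := by
    rw [hN, Matrix.transpose_smul, SimpleGraph.transpose_adjMatrix]
  have hMT : Mᵀ = M := by
    rw [hM, ← Matrix.exp_transpose, hNT]
  -- unitarity: Mᴴ * M = 1
  have hunit : Mᴴ * M = 1 := by
    rw [hM, ← Matrix.exp_conjTranspose, hNH,
      ← Matrix.exp_add_of_commute (-N) N (Commute.neg_left (Commute.refl N)),
      neg_add_cancel, NormedSpace.exp_zero]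
  -- γ = M v u
  have hγ : γ = M v u := by
    have := congrFun hpst v
    simpa [Matrix.mulVec_single, Pi.single_eq_same, Matrix.col_apply] using this.symm
  -- conj γ = -γ
  have hconj : (starRingEnd ℂ) γ = -γ := by
    have h1 : (starRingEnd ℂ) γ = Mᴴ u v := by
      rw [Matrix.conjTranspose_apply, hγ]; rfl
    have h2 : M u v = M v u := by
      conv_rhs => rw [← hMT, Matrix.transpose_apply]
    rw [h1, hMH, hD, Matrix.mul_diagonal, Matrix.diagonal_mul, h2, ← hγ]
    have hdd := hd_ne u v hclass
    linear_combination γ * hdd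
  -- |γ|² = 1 : γ * conj γ = 1
  have hnorm : γ * (starRingEnd ℂ) γ = 1 := by
    have happ : Mᴴ *ᵥ (M *ᵥ Pi.single u 1) = γ • (Mᴴ *ᵥ (Pi.single v 1 : V → ℂ)) := by
      rw [hpst, Matrix.mulVec_smul]
    rw [Matrix.mulVec_mulVec, hunit, Matrix.one_mulVec] at happ
    have := congrFun happ u
    simp only [Pi.single_eq_same, Pi.smul_apply, Matrix.mulVec_single, mul_one,
      smul_eq_mul, MulOpposite.op_one, one_smul, Matrix.col_apply] at this
    rw [Matrix.conjTranspose_apply, ← hγ] at this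
    exact this.symm
  -- conclude γ² = -1
  have hsq : γ * γ = Complex.I * Complex.I := by
    rw [Complex.I_mul_I]
    have : γ * (-γ) = 1 := by rw [← hconj]; exact hnorm
    linear_combination -this
  rcases mul_self_eq_mul_self_iff.mp hsq with h | h
  · exact Or.inl h
  · exact Or.inr h
end

section
/- Let L be the Laplacian of a simple graph X with spectral decomposition L = Σ_r λ_r F_r into projections onto distinct eigenspaces, and let u, v be vertices. If exp(itL) e_u = γ e_v for some real t and γ ∈ ℂ, then for every r, F_r e_u = γ⁻¹ e^{itλ_r} F_r e_v; in particular F_r e_u and F_r e_v are parallel, and ‖F_r e_u‖ = ‖F_r e_v‖ for all r. -/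
open Finset Matrix

/-! Orthogonal idempotents with `L = ∑ λ_r F_r` satisfy `F_r L = λ_r F_r`, hence
`F_r exp(-itL) = e^{-itλ_r} F_r`. Since `L` is real symmetric, `exp(itL)` is symmetric and
unitary, so conjugating `exp(itL) e_u = γ e_v` gives `exp(-itL) e_u = γ̄ e_v` with `γ̄ = γ⁻¹`;
applying `F_r` to this yields the relation, and `|γ⁻¹ e^{itλ_r}| = 1` gives the equality of norms. -/

open NormedSpace Nat in
theorem mul_exp_eq_exp_smul_of_mul_eq_smul {𝕂 𝔸 : Type*} [RCLike 𝕂] [NormedRing 𝔸]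
    [NormedAlgebra 𝕂 𝔸] [CompleteSpace 𝔸] {B A : 𝔸} {c : 𝕂} (h : B * A = c • B) :
    B * exp A = exp c • B := by
  have hpow : ∀ k : ℕ, B * A ^ k = c ^ k • B := by
    intro k
    induction k with
    | zero => simp
    | succ k ih => rw [pow_succ, ← mul_assoc, ih, smul_mul_assoc, h, smul_smul, ← pow_succ]
  have hterm : (fun k : ℕ => B * ((k !⁻¹ : 𝕂) • A ^ k)) = fun k => ((k !⁻¹ : 𝕂) • c ^ k) • B := by
    funext k
    rw [mul_smul_comm, hpow, smul_smul, smul_eq_mul]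
  have hB := (exp_series_hasSum_exp' (𝕂 := 𝕂) A).mul_left B
  rw [hterm] at hB
  exact hB.unique ((exp_series_hasSum_exp' c).smul_const B)

theorem mul_sum_smul_eq_smul_of_orthogonal {ι R S : Type*} [Fintype ι] [Semiring R]
    [Monoid S] [DistribMulAction S R] [SMulCommClass S R R]
    {F : ι → R} (hproj : ∀ r, F r * F r = F r) (horth : ∀ r s, r ≠ s → F r * F s = 0)
    (lam : ι → S) (r : ι) : F r * ∑ s, lam s • F s = lam r • F r := by
  rw [Finset.mul_sum, Finset.sum_eq_single_of_mem r (Finset.mem_univ r), mul_smul_comm, hproj]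
  intro s _ hsr
  rw [mul_smul_comm, horth r s hsr.symm, smul_zero]

namespace Matrix

theorem IsHermitian.conjTranspose_ofReal_mul_I_smul {n : Type*} {H : Matrix n n ℂ}
    (hH : H.IsHermitian) (t : ℝ) :
    (((t : ℂ) * Complex.I) • H)ᴴ = -(((t : ℂ) * Complex.I) • H) := by
  rw [conjTranspose_smul, hH.eq, ← neg_smul]
  congr 1
  simp

variable {n R : Type*} [Fintype n] [DecidableEq n]

open NormedSpace in
theorem mul_exp_eq_exp_smul_of_mul_eq_smul {B A : Matrix n n ℂ} {c : ℂ} (h : B * A = c • B) :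
    B * exp A = Complex.exp c • B := by
  -- `exp` depends only on the topology, so any Banach algebra norm on matrices will do.
  let : NormedRing (Matrix n n ℂ) := Matrix.linftyOpNormedRing
  let : NormedAlgebra ℂ (Matrix n n ℂ) := Matrix.linftyOpNormedAlgebra
  rw [Complex.exp_eq_exp_ℂ]
  exact _root_.mul_exp_eq_exp_smul_of_mul_eq_smul h

theorem conjTranspose_mulVec_single_of_isSymm [CommRing R] [StarRing R] {M : Matrix n n R}
    (hM : M.IsSymm) (u : n) : Mᴴ *ᵥ Pi.single u 1 = star (M *ᵥ Pi.single u 1) := by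
  conv_rhs => rw [← hM.eq, mulVec_transpose, star_vecMul, ← Pi.single_star, star_one]

theorem star_mul_self_eq_one_of_mulVec_single [CommRing R] [StarRing R] {U : Matrix n n R}
    (hU : Uᴴ * U = 1) {u v : n} {γ : R} (h : U *ᵥ Pi.single u 1 = γ • Pi.single v 1) :
    star γ * γ = 1 := by
  have hnorm : star (U *ᵥ Pi.single u 1) ⬝ᵥ (U *ᵥ Pi.single u 1)
      = star (Pi.single u 1 : n → R) ⬝ᵥ Pi.single u 1 := by
    rw [star_mulVec, ← dotProduct_mulVec, mulVec_mulVec, hU, one_mulVec]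
  simpa [h, ← Pi.single_star, star_smul, smul_dotProduct, dotProduct_smul, mul_comm] using hnorm

theorem conjTranspose_exp_mul_exp_of_conjTranspose_eq_neg {A : Matrix n n ℂ} (hA : Aᴴ = -A) :
    (NormedSpace.exp A)ᴴ * NormedSpace.exp A = 1 := by
  rw [← exp_conjTranspose, hA, ← exp_add_of_commute _ _ (Commute.refl A).neg_left,
    neg_add_cancel, NormedSpace.exp_zero]

end Matrix

theorem pst_projection_relation_general
    {V : Type*} [Fintype V] [DecidableEq V]
    (G : SimpleGraph V) [DecidableRel G.Adj]
    (d : ℕ) (lam : Fin (d + 1) → ℝ)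
    (F : Fin (d + 1) → Matrix V V ℂ)
    (hproj : ∀ r, F r * F r = F r)
    (horth : ∀ r s, r ≠ s → F r * F s = 0)
    (hdecomp : G.lapMatrix ℂ = ∑ r, (lam r : ℂ) • F r)
    (u v : V) (t : ℝ) (γ : ℂ)
    (hpst : NormedSpace.exp ((t * Complex.I) • G.lapMatrix ℂ) *ᵥ Pi.single u 1
        = γ • (Pi.single v 1 : V → ℂ)) :
    ∀ r, F r *ᵥ Pi.single u 1
        = (γ⁻¹ * Complex.exp ((t : ℂ) * lam r * Complex.I)) •
            (F r *ᵥ (Pi.single v 1 : V → ℂ)) ∧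
      ∑ w : V, ‖(F r *ᵥ (Pi.single u 1 : V → ℂ)) w‖ ^ 2
        = ∑ w : V, ‖(F r *ᵥ (Pi.single v 1 : V → ℂ)) w‖ ^ 2 := by
  set A : Matrix V V ℂ := ((t : ℂ) * Complex.I) • G.lapMatrix ℂ
  have hA : Aᴴ = -A := (G.isHermitian_lapMatrix ℂ).conjTranspose_ofReal_mul_I_smul t
  have hγ : star γ * γ = 1 :=
    star_mul_self_eq_one_of_mulVec_single (conjTranspose_exp_mul_exp_of_conjTranspose_eq_neg hA) hpst
  have hback : NormedSpace.exp (-A) *ᵥ Pi.single u 1 = star γ • Pi.single v 1 := by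
    rw [← hA, exp_conjTranspose,
      conjTranspose_mulVec_single_of_isSymm ((G.isSymm_lapMatrix ℂ).smul _).exp, hpst, star_smul,
      ← Pi.single_star, star_one]
  intro r
  have hFr : F r * NormedSpace.exp (-A) = Complex.exp (-((t : ℂ) * lam r * Complex.I)) • F r := by
    refine mul_exp_eq_exp_smul_of_mul_eq_smul ?_
    rw [mul_neg, mul_smul_comm, hdecomp, mul_sum_smul_eq_smul_of_orthogonal hproj horth, smul_smul,
      neg_smul]
    ring_nf
  have hmain : F r *ᵥ Pi.single u 1
      = (γ⁻¹ * Complex.exp ((t : ℂ) * lam r * Complex.I)) • (F r *ᵥ (Pi.single v 1 : V → ℂ)) := by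
    have h := congrArg (F r *ᵥ ·) hback
    simp only [mulVec_mulVec, hFr, smul_mulVec, mulVec_smul] at h
    rw [inv_eq_of_mul_eq_one_left hγ, mul_comm, ← smul_smul, ← h, smul_smul, ← Complex.exp_add,
      add_neg_cancel, Complex.exp_zero, one_smul]
  refine ⟨hmain, Finset.sum_congr rfl fun w _ => ?_⟩
  have hγ_norm : ‖γ‖ = 1 := by
    have h := congrArg norm hγ
    rw [CStarRing.norm_star_mul_self, norm_one] at h
    nlinarith [norm_nonneg γ]
  rw [hmain, Pi.smul_apply, smul_eq_mul, norm_mul, norm_mul, norm_inv, hγ_norm, Complex.norm_exp]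
  simp

/-- Let `L = Σ_r λ_r F_r` be the spectral decomposition of the
Laplacian of a graph (over `ℂ`, with real distinct eigenvalues `λ_r` and orthogonal
projections `F_r`). If `exp(itL) e_u = γ e_v`, then for every `r` we have
`F_r e_u = γ⁻¹ e^{itλ_r} F_r e_v`; in particular `F_r e_u` and `F_r e_v` are
parallel and have equal (Euclidean) norms. -/
theorem pst_projection_relation
    {V : Type*} [Fintype V] [DecidableEq V]
    (G : SimpleGraph V) [DecidableRel G.Adj]
    (d : ℕ) (lam : Fin (d + 1) → ℝ) (hinj : Function.Injective lam)
    (F : Fin (d + 1) → Matrix V V ℂ)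
    (hherm : ∀ r, (F r).IsHermitian)
    (hproj : ∀ r, F r * F r = F r)
    (horth : ∀ r s, r ≠ s → F r * F s = 0)
    (hsum : ∑ r, F r = 1)
    (hdecomp : G.lapMatrix ℂ = ∑ r, (lam r : ℂ) • F r)
    (u v : V) (t : ℝ) (γ : ℂ)
    (hpst : NormedSpace.exp ((t * Complex.I) • G.lapMatrix ℂ) *ᵥ Pi.single u 1
        = γ • (Pi.single v 1 : V → ℂ)) :
    ∀ r, F r *ᵥ Pi.single u 1
        = (γ⁻¹ * Complex.exp ((t : ℂ) * lam r * Complex.I)) •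
            (F r *ᵥ (Pi.single v 1 : V → ℂ)) ∧
      ∑ w : V, ‖(F r *ᵥ (Pi.single u 1 : V → ℂ)) w‖ ^ 2
        = ∑ w : V, ‖(F r *ᵥ (Pi.single v 1 : V → ℂ)) w‖ ^ 2 :=
  pst_projection_relation_general G d lam F hproj horth hdecomp u v t γ hpst
end
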